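/- For any continuous function S : K × K → ℝ on a compact set K ⊂ ℝ^N with S(y,x) = -S(x,y), and any ε > 0, there exist M ∈ ℕ, a continuous map φ : K → ℝ^M, a skew-symmetric matrix A, and a symmetric matrix B (both M × M real) such that sup_{x,y ∈ K} |S(x,y) - (φ(y)ᵀ A φ(x) + (1/2)φ(y)ᵀ B φ(y) - (1/2)φ(x)ᵀ B φ(x))| < ε. -/

import Mathlib

/-!
By Stone–Weierstrass, finite sums `T(x, y) = ∑ fᵢ(x) gᵢ(y)` are uniformly dense in `C(K × K, ℝ)`.
If `|S - T| < ε`, antisymmetry of `S` makes the antisymmetrisation `(T(x, y) - T(y, x)) / 2` just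
as close to `S`, and it is the skew form `φ(y)ᵀ A φ(x)` for `φ = (f, g)` and
`A = ½ [[0, -I], [I, 0]]`; so `B = 0` already suffices.
-/

open Matrix

namespace ContinuousMap

variable (X Y : Type*) [TopologicalSpace X] [TopologicalSpace Y]

def elementaryTensors : Submonoid C(X × Y, ℝ) where
  carrier := {h | ∃ (f : C(X, ℝ)) (g : C(Y, ℝ)), h = f.comp fst * g.comp snd}
  one_mem' := ⟨1, 1, by ext; simp⟩
  mul_mem' := by
    rintro _ _ ⟨f₁, g₁, rfl⟩ ⟨f₂, g₂, rfl⟩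
    exact ⟨f₁ * f₂, g₁ * g₂, by ext; simp only [mul_apply, comp_apply]; ring⟩

variable {X Y}

theorem adjoin_elementaryTensors_separatesPoints [T35Space X] [T35Space Y] :
    (Algebra.adjoin ℝ (elementaryTensors X Y : Set C(X × Y, ℝ))).SeparatesPoints := by
  intro p q hpq
  have mem {f : C(X, ℝ)} {g : C(Y, ℝ)} :
      f.comp fst * g.comp snd ∈ Algebra.adjoin ℝ (elementaryTensors X Y : Set C(X × Y, ℝ)) :=
    Algebra.subset_adjoin ⟨f, g, rfl⟩
  rcases not_and_or.mp fun h => hpq (Prod.ext h.1 h.2) with h | h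
  · obtain ⟨f, hf, hfpq⟩ := separatesPoints_continuous_of_t35Space h
    exact ⟨_, ⟨_, mem (f := ⟨f, hf⟩) (g := 1), rfl⟩, by simpa using hfpq⟩
  · obtain ⟨g, hg, hgpq⟩ := separatesPoints_continuous_of_t35Space h
    exact ⟨_, ⟨_, mem (f := 1) (g := ⟨g, hg⟩), rfl⟩, by simpa using hgpq⟩

theorem exists_sum_of_mem_adjoin_elementaryTensors {h : C(X × Y, ℝ)}
    (hh : h ∈ Algebra.adjoin ℝ (elementaryTensors X Y : Set C(X × Y, ℝ))) :
    ∃ (n : ℕ) (f : Fin n → C(X, ℝ)) (g : Fin n → C(Y, ℝ)),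
      ∀ p : X × Y, h p = ∑ i, f i p.1 * g i p.2 := by
  rw [← Subalgebra.mem_toSubmodule, Algebra.adjoin_eq_span, Submonoid.closure_eq] at hh
  obtain ⟨n, c, v, rfl⟩ := Submodule.mem_span_set'.mp hh
  choose f g hfg using fun i => (v i).2
  refine ⟨n, fun i => c i • f i, g, fun p => ?_⟩
  simp only [coe_sum, Finset.sum_apply, coe_smul, Pi.smul_apply, hfg, mul_apply, comp_apply,
    smul_eq_mul, fst_apply, snd_apply, mul_assoc]

theorem exists_sum_mul_near [CompactSpace X] [CompactSpace Y] [T35Space X] [T35Space Y]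
    (F : C(X × Y, ℝ)) {ε : ℝ} (hε : 0 < ε) :
    ∃ (n : ℕ) (f : Fin n → C(X, ℝ)) (g : Fin n → C(Y, ℝ)),
      ∀ p : X × Y, |F p - ∑ i, f i p.1 * g i p.2| < ε := by
  obtain ⟨⟨h, hh⟩, hFh⟩ := exists_mem_subalgebra_near_continuous_of_separatesPoints _
    adjoin_elementaryTensors_separatesPoints F F.continuous ε hε
  obtain ⟨n, f, g, hfg⟩ := exists_sum_of_mem_adjoin_elementaryTensors hh
  refine ⟨n, f, g, fun p => ?_⟩
  rw [← hfg, abs_sub_comm]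
  exact hFh p

end ContinuousMap

theorem abs_sub_half_sub_swap_lt {α 𝕜 : Type*} [Field 𝕜] [LinearOrder 𝕜] [IsStrictOrderedRing 𝕜]
    {S T : α → α → 𝕜} {ε : 𝕜} (hanti : ∀ x y, S y x = -S x y)
    (hT : ∀ x y, |S x y - T x y| < ε) (x y : α) :
    |S x y - (T x y - T y x) / 2| < ε := by
  have : S x y - (T x y - T y x) / 2 = ((S x y - T x y) - (S y x - T y x)) / 2 := by
    rw [hanti]; ring
  rw [this, abs_div, abs_two, div_lt_iff₀ two_pos]
  linarith [abs_sub (S x y - T x y) (S y x - T y x), hT x y, hT y x]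

namespace Matrix

theorem comp_symm_dotProduct_reindex_mulVec {ι κ α : Type*} [Fintype ι] [Fintype κ]
    [NonUnitalNonAssocSemiring α] (e : ι ≃ κ) (A : Matrix ι ι α) (u v : ι → α) :
    u ∘ e.symm ⬝ᵥ (reindex e e A *ᵥ v ∘ e.symm) = u ⬝ᵥ (A *ᵥ v) := by
  simp [reindex_apply, submatrix_mulVec_equiv, dotProduct_comp_equiv_symm, Function.comp_assoc]

variable (ι 𝕜 : Type*) [DecidableEq ι] [Field 𝕜]

def skewPairing : Matrix (ι ⊕ ι) (ι ⊕ ι) 𝕜 :=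
  fromBlocks 0 (-(2⁻¹ : 𝕜) • 1) ((2⁻¹ : 𝕜) • 1) 0

theorem skewPairing_transpose : (skewPairing ι 𝕜)ᵀ = -skewPairing ι 𝕜 := by
  simp [skewPairing, fromBlocks_transpose, fromBlocks_neg]

variable {ι 𝕜}

theorem sumElim_dotProduct_skewPairing_mulVec [Fintype ι] (a b c d : ι → 𝕜) :
    Sum.elim c d ⬝ᵥ (skewPairing ι 𝕜 *ᵥ Sum.elim a b) = (a ⬝ᵥ d - c ⬝ᵥ b) / 2 := by
  simp only [skewPairing, fromBlocks_mulVec, zero_mulVec, smul_mulVec, one_mulVec, zero_add,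
    add_zero, sumElim_dotProduct_sumElim, dotProduct_smul, smul_eq_mul, Sum.elim_comp_inl,
    Sum.elim_comp_inr, dotProduct_comm d a]
  ring

end Matrix

/-- LENS universality: Any continuous antisymmetric `S : K × K → ℝ` on a
compact `K ⊆ ℝ^N` can be uniformly approximated to accuracy `ε` by
`φ(y)ᵀ A φ(x) + (1/2) φ(y)ᵀ B φ(y) - (1/2) φ(x)ᵀ B φ(x)`
with `φ : K → ℝ^M` continuous, `A` skew-symmetric and `B` symmetric. -/
theorem stmt_3 {N : ℕ} (K : Set (EuclideanSpace ℝ (Fin N))) (hK : IsCompact K)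
    (S : K × K → ℝ) (hS : Continuous S)
    (hanti : ∀ x y : K, S (y, x) = - S (x, y))
    (ε : ℝ) (hε : 0 < ε) :
    ∃ (M : ℕ) (φ : K → (Fin M → ℝ)) (A B : Matrix (Fin M) (Fin M) ℝ),
      Continuous φ ∧ Aᵀ = -A ∧ Bᵀ = B ∧
      ∀ x y : K,
        |S (x, y) - (φ y ⬝ᵥ (A *ᵥ φ x)
            + (1 / 2) * (φ y ⬝ᵥ (B *ᵥ φ y)) - (1 / 2) * (φ x ⬝ᵥ (B *ᵥ φ x)))| < ε := by
  have : CompactSpace K := isCompact_iff_compactSpace.mp hK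
  obtain ⟨n, f, g, hfg⟩ := ContinuousMap.exists_sum_mul_near ⟨S, hS⟩ hε
  let e : Fin n ⊕ Fin n ≃ Fin (n + n) := finSumFinEquiv
  let ψ : K → Fin n ⊕ Fin n → ℝ := fun x => Sum.elim (fun i => f i x) (fun i => g i x)
  refine ⟨n + n, fun x => ψ x ∘ e.symm, reindex e e (skewPairing (Fin n) ℝ), 0, ?_, ?_,
    transpose_zero, fun x y => ?_⟩
  · refine continuous_pi fun j => ?_
    simp only [Function.comp_apply, ψ]
    cases e.symm j
    exacts [(f _).continuous, (g _).continuous]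
  · rw [transpose_reindex, skewPairing_transpose]
    rfl
  · simp only [zero_mulVec, dotProduct_zero, mul_zero, add_zero, sub_zero, ψ,
      comp_symm_dotProduct_reindex_mulVec, sumElim_dotProduct_skewPairing_mulVec]
    exact abs_sub_half_sub_swap_lt (S := fun x y => S (x, y)) hanti (fun x y => hfg (x, y)) x y
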